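/- Let M_f be the multiplication operator by f ∈ L^∞(S¹) on L²(S¹), where f is invertible in L^∞(S¹), and let p be the Hardy space projection (onto the closed span of {z^n : n ≥ 0}). If f is continuous, then p M_f - M_f p is a compact operator. -/

import Mathlib

open MeasureTheory
open scoped ENNReal

set_option maxHeartbeats 1000000

noncomputable section

instance : Fact (0 < 2 * Real.pi) := ⟨by positivity⟩

/-- The circle `S¹`, realized as `ℝ / 2πℤ`. -/
abbrev Circ : Type := AddCircle (2 * Real.pi)

/-- `L²(S¹)` with respect to normalized Haar (Lebesgue) measure. -/
abbrev L2Circ : Type := Lp ℂ 2 (AddCircle.haarAddCircle (T := 2 * Real.pi))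

namespace Stmt12Aux

open scoped ENNReal

abbrev μC : Measure Circ := AddCircle.haarAddCircle

lemma memLtop (g : C(Circ, ℂ)) : MemLp (⇑g) ∞ μC :=
  memLp_top_of_bound g.continuous.aestronglyMeasurable ‖g‖
    (Filter.Eventually.of_forall fun x => g.norm_coe_le_norm x)

lemma memMul (g : C(Circ, ℂ)) (h : L2Circ) : MemLp (fun t => g t * h t) 2 μC := by
  have h1 : MemLp (⇑g • ⇑h : Circ → ℂ) 2 μC := (Lp.memLp h).smul (memLtop g)
  exact h1

def mulFun (g : C(Circ, ℂ)) (h : L2Circ) : L2Circ := (memMul g h).toLp _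

lemma coeFn_mulFun (g : C(Circ, ℂ)) (h : L2Circ) :
    ⇑(mulFun g h) =ᵐ[μC] fun t => g t * h t := (memMul g h).coeFn_toLp

lemma norm_mulFun_le (g : C(Circ, ℂ)) (h : L2Circ) : ‖mulFun g h‖ ≤ ‖g‖ * ‖h‖ := by
  rw [mulFun, Lp.norm_toLp]
  have h1 : eLpNorm (fun t => g t * h t) 2 μC ≤ eLpNorm (⇑g) ∞ μC * eLpNorm (⇑h) 2 μC :=
    eLpNorm_smul_le_eLpNorm_top_mul_eLpNorm 2 (Lp.aestronglyMeasurable h) (⇑g)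
  have h2 : eLpNorm (⇑g) ∞ μC ≤ ENNReal.ofReal ‖g‖ := by
    rw [eLpNorm_exponent_top]
    exact eLpNormEssSup_le_of_ae_bound
      (Filter.Eventually.of_forall fun x => g.norm_coe_le_norm x)
  calc (eLpNorm (fun t => g t * h t) 2 μC).toReal
      ≤ (ENNReal.ofReal ‖g‖ * eLpNorm (⇑h) 2 μC).toReal := by
        apply ENNReal.toReal_mono
        · exact ENNReal.mul_ne_top ENNReal.ofReal_ne_top (Lp.eLpNorm_ne_top h)
        · exact h1.trans (mul_le_mul_left h2 _)
    _ = ‖g‖ * ‖h‖ := by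
        rw [ENNReal.toReal_mul, ENNReal.toReal_ofReal (norm_nonneg g), Lp.norm_def]

/-- Multiplication by a continuous function, as a continuous linear operator on `L²`. -/
def mulOp (g : C(Circ, ℂ)) : L2Circ →L[ℂ] L2Circ :=
  LinearMap.mkContinuous
    { toFun := mulFun g
      map_add' := fun h₁ h₂ => by
        apply Lp.ext
        filter_upwards [coeFn_mulFun g (h₁ + h₂), coeFn_mulFun g h₁, coeFn_mulFun g h₂,
          Lp.coeFn_add (h₁ : L2Circ) h₂, Lp.coeFn_add (mulFun g h₁) (mulFun g h₂)]
          with t e0 e1 e2 e3 e4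
        rw [e0, e4, Pi.add_apply, e1, e2, e3, Pi.add_apply, mul_add]
      map_smul' := fun c h => by
        apply Lp.ext
        filter_upwards [coeFn_mulFun g (c • h), coeFn_mulFun g h,
          Lp.coeFn_smul c (h : L2Circ), Lp.coeFn_smul c (mulFun g h)]
          with t e0 e1 e2 e3
        rw [RingHom.id_apply, e0, e3, Pi.smul_apply, e1, e2, Pi.smul_apply,
          smul_eq_mul, smul_eq_mul]
        ring }
    ‖g‖ (norm_mulFun_le g)

lemma coeFn_mulOp (g : C(Circ, ℂ)) (h : L2Circ) :
    ⇑(mulOp g h) =ᵐ[μC] fun t => g t * h t := coeFn_mulFun g h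

lemma norm_mulOp_le (g : C(Circ, ℂ)) : ‖mulOp g‖ ≤ ‖g‖ :=
  LinearMap.mkContinuous_norm_le _ (norm_nonneg g) _

/-- Multiplication as a continuous linear map `C(S¹) → B(L²)`. -/
def mulCLM : C(Circ, ℂ) →L[ℂ] L2Circ →L[ℂ] L2Circ :=
  LinearMap.mkContinuous
    { toFun := mulOp
      map_add' := fun g₁ g₂ => by
        ext h
        filter_upwards [coeFn_mulFun (g₁ + g₂) h, coeFn_mulFun g₁ h, coeFn_mulFun g₂ h,
          Lp.coeFn_add (mulFun g₁ h) (mulFun g₂ h)] with t e0 e1 e2 e3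
        show mulFun (g₁ + g₂) h t = (mulFun g₁ h + mulFun g₂ h) t
        rw [e0, e3, Pi.add_apply, e1, e2, ContinuousMap.add_apply, add_mul]
      map_smul' := fun c g => by
        ext h
        filter_upwards [coeFn_mulFun (c • g) h, coeFn_mulFun g h,
          Lp.coeFn_smul c (mulFun g h)] with t e0 e1 e2
        show mulFun (c • g) h t = (c • mulFun g h) t
        rw [e0, e2, Pi.smul_apply, e1, ContinuousMap.smul_apply, smul_eq_mul, smul_eq_mul]
        ring }
    1 (fun g => by rw [one_mul]; exact norm_mulOp_le g)

lemma mulCLM_apply (g : C(Circ, ℂ)) : mulCLM g = mulOp g := rfl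

lemma mulOp_fourierLp (n m : ℤ) :
    mulOp (fourier n) (fourierLp 2 m) = fourierLp 2 (n + m) := by
  rw [show mulOp (fourier n) (fourierLp 2 m) = mulFun (fourier n) (fourierLp 2 m) from rfl]
  apply Lp.ext
  filter_upwards [coeFn_mulFun (fourier n) (fourierLp 2 m), coeFn_fourierLp 2 m,
    coeFn_fourierLp 2 (n + m)] with t e0 e1 e2
  rw [e0, e1, e2, fourier_add]

/-- An operator whose range lies in a finite-dimensional submodule is compact. -/
lemma isCompactOperator_of_mem_fd {E F : Type*} [NormedAddCommGroup E] [NormedAddCommGroup F]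
    [NormedSpace ℂ E] [NormedSpace ℂ F] (T : E →L[ℂ] F) (V : Submodule ℂ F)
    (hfd : FiniteDimensional ℂ V) (hV : ∀ x, T x ∈ V) : IsCompactOperator ⇑T := by
  haveI := hfd
  haveI : ProperSpace V := FiniteDimensional.proper ℂ V
  set g := T.codRestrict V hV with hg
  have hgc : IsCompactOperator ⇑g := by
    refine ⟨Metric.closedBall 0 ‖g‖, isCompact_closedBall _ _, ?_⟩
    refine Filter.mem_of_superset (Metric.closedBall_mem_nhds (0 : E) one_pos) ?_
    intro x hx
    simp only [Set.mem_preimage, Metric.mem_closedBall, dist_zero_right] at hx ⊢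
    calc ‖g x‖ ≤ ‖g‖ * ‖x‖ := g.le_opNorm x
      _ ≤ ‖g‖ * 1 := mul_le_mul_of_nonneg_left hx (norm_nonneg g)
      _ = ‖g‖ := mul_one _
  have h2 := hgc.continuous_comp continuous_subtype_val
  have heq : (Subtype.val ∘ ⇑g) = ⇑T := rfl
  rwa [heq] at h2

end Stmt12Aux

open Stmt12Aux

/-- Let `f` be a continuous nowhere-vanishing function on `S¹` (so `f` is invertible
in `L^∞(S¹)`), let `M` be the multiplication operator `M g = f g` on `L²(S¹)`, and
let `p` be the Hardy space projection, the orthogonal projection onto the closed span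
of `{zⁿ : n ≥ 0}` (characterized on the Fourier basis).  Then `p M - M p` is a
compact operator. -/
theorem stmt12 (f : C(Circ, ℂ)) (hf0 : ∀ z : Circ, f z ≠ 0)
    (M p : L2Circ →L[ℂ] L2Circ)
    (hM : ∀ g : L2Circ, (M g : Circ → ℂ) =ᶠ[ae (AddCircle.haarAddCircle (T := 2 * Real.pi))]
      fun t => f t * g t)
    (hp : ∀ n : ℤ, p (fourierLp 2 n) = if 0 ≤ n then fourierLp 2 n else 0)
    (hpidem : IsIdempotentElem p) (hpsa : IsSelfAdjoint p) :
    IsCompactOperator ⇑(p ∘L M - M ∘L p) := by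
  classical
  -- `M` agrees with our concrete multiplication operator.
  have hMf : M = mulOp f := by
    ext1 h
    rw [show mulOp f h = mulFun f h from rfl]
    apply Lp.ext
    filter_upwards [hM h, coeFn_mulFun f h] with t e1 e2
    rw [e1, e2]
  -- The commutator as a continuous linear map in the symbol.
  set Φ : C(Circ, ℂ) →L[ℂ] L2Circ →L[ℂ] L2Circ :=
    ((ContinuousLinearMap.compL ℂ L2Circ L2Circ L2Circ p).comp mulCLM) -
      (((ContinuousLinearMap.compL ℂ L2Circ L2Circ L2Circ).flip p).comp mulCLM) with hΦ
  have hΦapp : ∀ g : C(Circ, ℂ), Φ g = p ∘L mulOp g - mulOp g ∘L p := fun g => rfl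
  -- The set of symbols with compact commutator is a closed submodule.
  set S : Submodule ℂ C(Circ, ℂ) :=
    (compactOperator (RingHom.id ℂ) L2Circ L2Circ).comap (Φ.toLinearMap) with hS
  have hSmem : ∀ g : C(Circ, ℂ), g ∈ S ↔ IsCompactOperator ⇑(Φ g) := fun g => Iff.rfl
  have hSclosed : IsClosed (S : Set C(Circ, ℂ)) := by
    have : (S : Set C(Circ, ℂ)) = ⇑Φ ⁻¹' {T : L2Circ →L[ℂ] L2Circ | IsCompactOperator ⇑T} := rfl
    rw [this]
    exact isClosed_setOf_isCompactOperator.preimage Φ.continuous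
  -- Each Fourier monomial has a finite-rank (hence compact) commutator.
  have hfourier : ∀ n : ℤ, (fourier n : C(Circ, ℂ)) ∈ S := by
    intro n
    rw [hSmem]
    set V : Submodule ℂ L2Circ :=
      Submodule.span ℂ ((fun k : ℤ => (fourierLp 2 k : L2Circ)) '' Set.Icc (-|n|) |n|) with hV
    haveI hfd : FiniteDimensional ℂ V :=
      FiniteDimensional.span_of_finite ℂ ((Set.finite_Icc _ _).image _)
    have hbasis : ∀ m : ℤ, (Φ (fourier n)) (fourierLp 2 m) ∈ V := by
      intro m
      have key : (Φ (fourier n)) (fourierLp 2 m) =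
          (if 0 ≤ n + m then (fourierLp 2 (n + m) : L2Circ) else 0) -
            (if 0 ≤ m then (fourierLp 2 (n + m) : L2Circ) else 0) := by
        rw [hΦapp]
        simp only [ContinuousLinearMap.sub_apply, ContinuousLinearMap.comp_apply]
        rw [mulOp_fourierLp, hp, hp]
        congr 1
        split_ifs with hm
        · exact mulOp_fourierLp n m
        · exact map_zero _
      rw [key]
      have habs1 := le_abs_self n
      have habs2 := neg_abs_le n
      by_cases h1 : 0 ≤ n + m <;> by_cases h2 : 0 ≤ m
      · simp only [if_pos h1, if_pos h2, sub_self]; exact V.zero_mem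
      · simp only [if_pos h1, if_neg h2, sub_zero]
        exact Submodule.subset_span ⟨n + m, by constructor <;> omega, rfl⟩
      · simp only [if_neg h1, if_pos h2, zero_sub]
        exact V.neg_mem (Submodule.subset_span ⟨n + m, by constructor <;> omega, rfl⟩)
      · simp only [if_neg h1, if_neg h2, sub_zero]; exact V.zero_mem
    have hVclosed : IsClosed (V : Set L2Circ) := V.closed_of_finiteDimensional
    set W : Submodule ℂ L2Circ :=
      V.comap ((Φ (fourier n)) : L2Circ →ₗ[ℂ] L2Circ) with hW
    have hWclosed : IsClosed (W : Set L2Circ) := hVclosed.preimage (Φ (fourier n)).continuous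
    have hle : Submodule.span ℂ (Set.range (fun k : ℤ => (fourierLp 2 k : L2Circ))) ≤ W :=
      Submodule.span_le.mpr (Set.range_subset_iff.mpr fun m => hbasis m)
    have htop : (⊤ : Submodule ℂ L2Circ) ≤ W := by
      rw [← @span_fourierLp_closure_eq_top (2 * Real.pi) _ 2 _ (by norm_num)]
      exact Submodule.topologicalClosure_minimal _ hle hWclosed
    exact isCompactOperator_of_mem_fd _ V hfd fun x => htop trivial
  -- Density of trigonometric polynomials.
  have hspan : Submodule.span ℂ (Set.range (fun k : ℤ => (fourier k : C(Circ, ℂ)))) ≤ S :=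
    Submodule.span_le.mpr (Set.range_subset_iff.mpr hfourier)
  have htop : (⊤ : Submodule ℂ C(Circ, ℂ)) ≤ S := by
    rw [← @span_fourier_closure_eq_top (2 * Real.pi) _]
    exact Submodule.topologicalClosure_minimal _ hspan hSclosed
  have hfS : f ∈ S := htop trivial
  have hcompact : IsCompactOperator ⇑(Φ f) := hfS
  rw [hMf]
  rw [hΦapp] at hcompact
  exact hcompact
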